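/- Let F be a properly parametrized Markov multi-map with associated SFT Σ_M, and let D={a∈A₀: R₀(a)∩P≠∅}. Suppose D is nonempty and sup{ℓ(I_{u₀⋯u_n})/ℓ(I_{u₀⋯u_{n−1}}) : u∈L, u_{n−1}∈D, ℓ(I_{u₀⋯u_{n−1}})≠0} < 1. If there exists an irreducible component C₀⊂A containing A₀, then Σ_M satisfies the Coding Condition (CC). -/

import Mathlib

open Set Topology

/-! ### Generic dynamical notions -/

/-- Topological transitivity of a map. -/
def TopTransitive {α : Type*} [TopologicalSpace α] (T : α → α) : Prop :=
  ∀ U V : Set α, IsOpen U → IsOpen V → U.Nonempty → V.Nonempty →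
    ∃ n : ℕ, (T^[n] '' U ∩ V).Nonempty

/-- Topological mixing of a map. -/
def TopMixing {α : Type*} [TopologicalSpace α] (T : α → α) : Prop :=
  ∀ U V : Set α, IsOpen U → IsOpen V → U.Nonempty → V.Nonempty →
    ∃ N : ℕ, ∀ n, N ≤ n → (T^[n] '' U ∩ V).Nonempty

/-- Density of the set of periodic points of a map. -/
def DensePeriodic {α : Type*} [TopologicalSpace α] (T : α → α) : Prop :=
  Dense {x : α | ∃ p : ℕ, 1 ≤ p ∧ T^[p] x = x}

/-- The metric `d(x,y) = sup_k |x_k - y_k|/(k+1)` on sequence spaces. -/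
noncomputable def dseq (x y : ℕ → ℝ) : ℝ := ⨆ k : ℕ, |x k - y k| / ((k : ℝ) + 1)

/-- The specification property for a map `T` with respect to a distance function `d`. -/
def SpecProp {α : Type*} (T : α → α) (d : α → α → ℝ) : Prop :=
  ∀ ε : ℝ, 0 < ε → ∃ N : ℕ, ∀ l : ℕ, ∀ x : Fin (l + 1) → α, ∀ a b : Fin (l + 1) → ℕ,
    (∀ k, 1 ≤ a k) → (∀ k, a k ≤ b k) →
    (∀ k : Fin l, b k.castSucc < a k.succ ∧ b k.castSucc + N ≤ a k.succ) →
    ∀ p : ℕ, b (Fin.last l) + N ≤ p →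
      ∃ z : α, T^[p] z = z ∧
        ∀ k : Fin (l + 1), ∀ i : ℕ, a k ≤ i → i ≤ b k → d (T^[i] z) (T^[i] (x k)) < ε

/-- The length `ℓ` of a (possibly degenerate) interval. -/
noncomputable def intervalLen (I : Set ℝ) : ℝ := sSup I - sInf I

/-! ### Markov multi-maps -/

/-- A Markov multi-map of the interval, given by a tuple
`(P, A₀, A₁, A₂, D, R, {f_a})` as in the paper, together with the derived data
(inverse maps `g`, interiors `D0`, `R0`, graphs `Gr`, `G0`) which are uniquely
determined by the defining equations below. -/
structure MarkovMultiMap where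
  A : Type
  finA : Finite A
  A0 : Set A
  A1 : Set A
  A2 : Set A
  P : Finset ℝ
  D : A → Set ℝ
  R : A → Set ℝ
  f : A → ℝ → ℝ
  g : A → ℝ → ℝ
  D0 : A → Set ℝ
  R0 : A → Set ℝ
  Gr : A → Set (ℝ × ℝ)
  G0 : A → Set (ℝ × ℝ)
  P_zero : (0 : ℝ) ∈ P
  P_one : (1 : ℝ) ∈ P
  P_sub : (P : Set ℝ) ⊆ Set.Icc 0 1
  A_cover : ∀ a : A, a ∈ A0 ∨ a ∈ A1 ∨ a ∈ A2
  A01 : A0 ∩ A1 = ∅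
  A02 : A0 ∩ A2 = ∅
  A12 : A1 ∩ A2 = ∅
  D_A0 : ∀ a ∈ A0, ∃ p ∈ P, ∃ q ∈ P, p < q ∧ (∀ r ∈ P, ¬(p < r ∧ r < q)) ∧ D a = Set.Icc p q
  D_A12 : ∀ a ∈ A1 ∪ A2, ∃ p ∈ P, D a = {p}
  R_A0 : ∀ a ∈ A0, ∃ u ∈ P, ∃ v ∈ P, u < v ∧ R a = Set.Icc u v
  R_A1 : ∀ a ∈ A1, ∃ u ∈ P, ∃ v ∈ P, u < v ∧ R a = Set.Icc u v ∧
    Set.Icc u v ∩ (P : Set ℝ) = {u, v}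
  R_A2 : ∀ a ∈ A2, ∃ u ∈ P, R a = {u}
  f_homeo : ∀ a ∈ A0, ContinuousOn (f a) (D a) ∧ Set.BijOn (f a) (D a) (R a)
  g_A0 : ∀ a ∈ A0, (∀ x ∈ D a, g a (f a x) = x) ∧ ∀ y ∈ R a, g a y ∈ D a ∧ f a (g a y) = y
  g_A12 : ∀ a ∈ A1 ∪ A2, ∀ y ∈ R a, g a y ∈ D a
  cover : Set.Icc (0 : ℝ) 1 = ⋃ a : A, D a
  D0_A0 : ∀ a ∈ A0, D0 a = interior (D a)
  D0_A12 : ∀ a ∈ A1 ∪ A2, D0 a = D a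
  R0_A01 : ∀ a ∈ A0 ∪ A1, R0 a = interior (R a)
  R0_A2 : ∀ a ∈ A2, R0 a = R a
  Gr_A0 : ∀ a ∈ A0, Gr a = {q : ℝ × ℝ | q.1 ∈ D a ∧ q.2 = f a q.1}
  Gr_A12 : ∀ a ∈ A1 ∪ A2, Gr a = (D a) ×ˢ (R a)
  G0_A0 : ∀ a ∈ A0, G0 a = {q : ℝ × ℝ | q.1 ∈ D0 a ∧ q.2 = f a q.1}
  G0_A1 : ∀ a ∈ A1, G0 a = (D a) ×ˢ (R0 a)
  G0_A2 : ∀ a ∈ A2, G0 a = Gr a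

namespace MarkovMultiMap

variable (M : MarkovMultiMap)

/-- The graph `G(F)` of the multi-map. -/
def GF : Set (ℝ × ℝ) := ⋃ a : M.A, M.Gr a

/-- `F` is properly parametrized: the sets `G₀(a)` partition `G(F)`. -/
def ProperlyParametrized : Prop :=
  (⋃ a : M.A, M.G0 a) = M.GF ∧ ∀ a b : M.A, a ≠ b → Disjoint (M.G0 a) (M.G0 b)

/-- The forward trajectory space `X`. -/
def X : Set (ℕ → ℝ) :=
  {x | (∀ k, x k ∈ Set.Icc (0 : ℝ) 1) ∧ ∀ k, (x k, x (k + 1)) ∈ M.GF}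

/-- The left-shift map `T` on the forward trajectory space. -/
def shift : M.X → M.X :=
  fun x => ⟨fun k => x.1 (k + 1), ⟨fun k => x.2.1 (k + 1), fun k => x.2.2 (k + 1)⟩⟩

/-- The inverse trajectory (inverse limit) space `Y`, encoded by `y k = y_{-k}`. -/
def Y : Set (ℕ → ℝ) :=
  {y | (∀ k, y k ∈ Set.Icc (0 : ℝ) 1) ∧ ∀ k, (y (k + 1), y k) ∈ M.GF}

/-- The right-shift map `S` on the inverse limit space (in the encoding `y k = y_{-k}`). -/
def ishift : M.Y → M.Y :=
  fun y => ⟨fun k => y.1 (k + 1), ⟨fun k => y.2.1 (k + 1), fun k => y.2.2 (k + 1)⟩⟩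

/-- The space `X_n` of finite trajectories of length `n`. -/
def finTraj (n : ℕ) : Set (Fin n → ℝ) :=
  {x | (∀ i, x i ∈ Set.Icc (0 : ℝ) 1) ∧
    ∀ i : Fin n, ∀ h : (i : ℕ) + 1 < n, (x i, x ⟨(i : ℕ) + 1, h⟩) ∈ M.GF}

/-- The associated nearest-neighbor SFT `Σ_M`. -/
def SFT : Set (ℕ → M.A) := {a | ∀ n : ℕ, M.D0 (a (n + 1)) ⊆ M.R0 (a n)}

/-- The word `u` (of length `n`) occurs in some point of `Z`. -/
def WordIn {n : ℕ} (u : Fin n → M.A) (Z : Set (ℕ → M.A)) : Prop :=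
  ∃ z ∈ Z, ∃ m : ℕ, ∀ i : Fin n, u i = z (m + (i : ℕ))

/-- `L_n`, the words of length `n` in the language of `Σ_M`. -/
def Lang (n : ℕ) : Set (Fin n → M.A) := {u | M.WordIn u M.SFT}

/-- `(x,u)` is a labeled finite trajectory: `(x_k, x_{k+1}) ∈ G(u_k)` for all `k`. -/
def Labeled {n : ℕ} (x : Fin (n + 1) → ℝ) (u : Fin n → M.A) : Prop :=
  ∀ i : Fin n, (x i.castSucc, x i.succ) ∈ M.Gr (u i)

/-- `(x,u)` is a special labeled finite trajectory: `(x_k, x_{k+1}) ∈ G₀(u_k)` for all `k`. -/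
def SpecialLabeled {n : ℕ} (x : Fin (n + 1) → ℝ) (u : Fin n → M.A) : Prop :=
  ∀ i : Fin n, (x i.castSucc, x i.succ) ∈ M.G0 (u i)

/-- A word `u ∈ L_n` is essential if the set of finite trajectories specially labeled
by `u` is open in `X_{n+1}`. -/
def EssentialWord {n : ℕ} (u : Fin n → M.A) : Prop :=
  u ∈ M.Lang n ∧ IsOpen {x : M.finTraj (n + 1) | M.SpecialLabeled x.1 u}

/-- A symbol is essential if it appears in some essential word. -/
def EssentialSymbol (a : M.A) : Prop :=
  ∃ n : ℕ, ∃ u : Fin n → M.A, M.EssentialWord u ∧ ∃ i : Fin n, u i = a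

/-- `A^(e)`, the set of essential symbols. -/
def Ess : Set M.A := {a | M.EssentialSymbol a}

/-- `E`, the set of essential symbolic sequences. -/
def E : Set (ℕ → M.A) := {z ∈ M.SFT | ∀ i : ℕ, z i ∈ M.Ess}

/-- A word all of whose letters lie in `C`, in the language of `Σ_M`. -/
def WordOver {n : ℕ} (u : Fin n → M.A) (C : Set M.A) : Prop :=
  u ∈ M.Lang n ∧ ∀ i, u i ∈ C

/-- There is a word of length `n+1` over `C` beginning with `a` and ending with `b`. -/
def WordFromTo (C : Set M.A) (a b : M.A) (n : ℕ) : Prop :=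
  ∃ u : Fin (n + 1) → M.A, M.WordOver u C ∧ u 0 = a ∧ u (Fin.last n) = b

/-- `C ⊆ A` is irreducible. -/
def IrreducibleSet (C : Set M.A) : Prop :=
  ∀ a ∈ C, ∀ b ∈ C, ∃ n : ℕ, M.WordFromTo C a b n

/-- `C` is an irreducible component (a maximal irreducible subset of `A`). -/
def IrreducibleComponent (C : Set M.A) : Prop :=
  M.IrreducibleSet C ∧ ∀ C' : Set M.A, M.IrreducibleSet C' → C ⊆ C' → C' = C

/-- `C ⊆ A` is mixing. -/
def MixingSet (C : Set M.A) : Prop :=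
  ∃ N : ℕ, 1 ≤ N ∧ ∀ a ∈ C, ∀ b ∈ C, ∀ n : ℕ, N ≤ n + 1 → M.WordFromTo C a b n

/-- `C` is a mixing component (a maximal mixing subset of `A`). -/
def MixingComponent (C : Set M.A) : Prop :=
  M.MixingSet C ∧ ∀ C' : Set M.A, M.MixingSet C' → C ⊆ C' → C' = C

/-- The Irreducibility Condition (IC). -/
def IC : Prop := ∃ C : Set M.A, M.IrreducibleComponent C ∧ M.Ess ⊆ C

/-- The Mixing Condition (MC). -/
def MC : Prop := ∃ C : Set M.A, M.MixingComponent C ∧ M.Ess ⊆ C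

/-- `Z` is a subshift of `Σ_M`: shift-invariant and closed in the product of discrete
topologies (closedness phrased combinatorially). -/
def IsSubshift (Z : Set (ℕ → M.A)) : Prop :=
  Z ⊆ M.SFT ∧ (∀ z ∈ Z, (fun k => z (k + 1)) ∈ Z) ∧
  ∀ x : ℕ → M.A, (∀ n : ℕ, ∃ z ∈ Z, ∀ i, i < n → z i = x i) → x ∈ Z

/-- The symbol `a` occurs in some point of `Z`. -/
def SymbolInShift (Z : Set (ℕ → M.A)) (a : M.A) : Prop := ∃ z ∈ Z, ∃ k : ℕ, z k = a

/-- `Z` is transitive on symbols. -/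
def TransitiveOnSymbols (Z : Set (ℕ → M.A)) : Prop :=
  ∀ a b : M.A, M.SymbolInShift Z a → M.SymbolInShift Z b →
    ∃ z ∈ Z, ∃ m n : ℕ, z m = a ∧ z (m + n) = b

end MarkovMultiMap

/-- The composition `g_{u₀} ∘ ⋯ ∘ g_{u_n}` of inverse maps along a list of symbols. -/
def gWordList (M : MarkovMultiMap) : List M.A → ℝ → ℝ
  | [], x => x
  | a :: l, x => M.g a (gWordList M l x)

namespace MarkovMultiMap

/-- The inverse map `g_u` associated to a word `u = u₀⋯u_n`. -/
def gWord (M : MarkovMultiMap) {n : ℕ} (u : Fin (n + 1) → M.A) : ℝ → ℝ :=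
  gWordList M (List.ofFn u)

/-- The interval `I_u = g_u(R(u_n))`. -/
def Iword (M : MarkovMultiMap) {n : ℕ} (u : Fin (n + 1) → M.A) : Set ℝ :=
  M.gWord u '' M.R (u (Fin.last n))

/-- The Coding Condition (CC). -/
def CC (M : MarkovMultiMap) : Prop :=
  ∃ Z : Set (ℕ → M.A), M.IsSubshift Z ∧ M.TransitiveOnSymbols Z ∧
    (∀ y ∈ Set.Icc (0 : ℝ) 1, ∃ a ∈ Z, ∃ x ∈ M.X, x 0 = y ∧
      ∀ i : ℕ, (x i, x (i + 1)) ∈ M.Gr (a i)) ∧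
    (∀ ε : ℝ, 0 < ε → ∃ N : ℕ, ∀ n : ℕ, N ≤ n → ∀ u : Fin (n + 1) → M.A,
      M.WordIn u Z → intervalLen (M.Iword u) < ε)

/-- Uniform equicontinuity of the family `{g_u : u ∈ L(C)}`. -/
def UnifEquicontOn (M : MarkovMultiMap) (C : Set M.A) : Prop :=
  ∀ ε : ℝ, 0 < ε → ∃ δ : ℝ, 0 < δ ∧ ∀ n : ℕ, ∀ u : Fin (n + 1) → M.A, M.WordOver u C →
    ∀ x ∈ M.R (u (Fin.last n)), ∀ y ∈ M.R (u (Fin.last n)),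
      |x - y| < δ → |M.gWord u x - M.gWord u y| < ε

end MarkovMultiMap

/-! The subshift `Z` consists of the points of `Σ_M` with symbols in the component `C₀` that meet,
in every window of a fixed length, a symbol outside `A₀` or in `D`. Along a word of `Z` the
interval `I_u` shrinks by the factor `γ` at each symbol of `D` and collapses to a point at a symbol
outside `A₀`, so its length decays geometrically with the length of the word.

The range of a symbol of `A₀ \ D` contains no partition point in its interior, so its successors
are exactly the `A₀`-symbols whose domain is that range. Every point of `[0,1]` is therefore coded
by an orbit that moves, from a symbol of `A₀ \ D`, to a successor strictly closer to `D` (which is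
reachable by irreducibility), and from a symbol of `D`, to any successor whose domain contains the
image point. Prefixing these orbits by connecting words of bounded length inside `C₀` gives
transitivity on symbols. -/

lemma intervalLen_eq_diam {S : Set ℝ} (hS : Bornology.IsBounded S) :
    intervalLen S = Metric.diam S :=
  (Real.diam_eq hS).symm

lemma intervalLen_eq_zero_of_subsingleton {S : Set ℝ} (hS : S.Subsingleton) :
    intervalLen S = 0 := by
  rw [intervalLen_eq_diam hS.finite.isBounded, Metric.diam_subsingleton hS]

lemma exists_mem_Ioo_notMem_closer {P : Set ℝ} (hP : P.Finite) {u v x : ℝ} (huv : u < v)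
    (hx : x ∈ Icc u v) : ∃ x' ∈ Ioo u v, x' ∉ P ∧ ∀ r ∈ P, r ≠ x → |x' - x| < |r - x| := by
  obtain ⟨δ, hδ, hball⟩ := Metric.isOpen_iff.1 (hP.sdiff (t := {x})).isClosed.isOpen_compl x
    (by simp)
  have hx_closure : x ∈ closure (Ioo u v) := by rwa [closure_Ioo huv.ne]
  obtain ⟨x', ⟨hx'uv, hx'δ⟩, hx'P⟩ := (hP.countable.dense_compl ℝ).inter_open_nonempty
    (Ioo u v ∩ Metric.ball x δ) (isOpen_Ioo.inter Metric.isOpen_ball)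
    ((mem_closure_iff.1 hx_closure _ Metric.isOpen_ball (Metric.mem_ball_self hδ)).mono
      fun y hy => ⟨hy.2, hy.1⟩)
  refine ⟨x', hx'uv, hx'P, fun r hr hrx => ?_⟩
  have hr_far : r ∉ Metric.ball x δ := fun h => hball h ⟨hr, hrx⟩
  rw [Metric.mem_ball, Real.dist_eq, not_lt] at hr_far
  rw [Metric.mem_ball, Real.dist_eq] at hx'δ
  linarith

def ChainUpTo {α : Type*} (r : α → α → Prop) (w : ℕ → α) (n : ℕ) : Prop :=
  ∀ i < n, r (w i) (w (i + 1))

def splice {α : Type*} (w : ℕ → α) (n : ℕ) (t : ℕ → α) : ℕ → α :=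
  fun i => if i < n then w i else t (i - n)

def VisitsWithin {α : Type*} (K : ℕ) (S : Set α) (w : ℕ → α) : Prop :=
  ∀ i, ∃ j, i ≤ j ∧ j ≤ i + K ∧ w j ∈ S

section Splice

variable {α : Type*} {w t : ℕ → α} {n i : ℕ}

lemma splice_of_le_left (hi : i ≤ n) (hwt : w n = t 0) : splice w n t i = w i := by
  unfold splice
  split_ifs with h
  · rfl
  · rw [show i = n by omega, Nat.sub_self, hwt]

lemma splice_of_le_right (hi : n ≤ i) : splice w n t i = t (i - n) := by
  simp [splice, not_lt.2 hi]

lemma splice_chain {r : α → α → Prop} (hw : ChainUpTo r w n) (hwt : w n = t 0)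
    (ht : ∀ i, r (t i) (t (i + 1))) (i : ℕ) : r (splice w n t i) (splice w n t (i + 1)) := by
  by_cases hi : i < n
  · rw [splice_of_le_left hi.le hwt, splice_of_le_left hi hwt]
    exact hw i hi
  · rw [splice_of_le_right (not_lt.1 hi), splice_of_le_right (by omega),
      show i + 1 - n = i - n + 1 by omega]
    exact ht _

lemma VisitsWithin.splice {K : ℕ} {S : Set α} (ht : VisitsWithin K S t) :
    VisitsWithin (n + K) S (splice w n t) := by
  intro i
  obtain ⟨j, hij, hjK, hj⟩ := ht (i - n)
  refine ⟨n + j, by omega, by omega, ?_⟩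
  rwa [splice_of_le_right (by omega), Nat.add_sub_cancel_left]

end Splice

lemma visitsWithin_of_lt {α : Type*} {S : Set α} {w : ℕ → α} {K : ℕ} (ρ : α → ℕ)
    (hρ : ∀ a, ρ a ≤ K) (hdec : ∀ i, w i ∉ S → ρ (w (i + 1)) < ρ (w i)) :
    VisitsWithin K S w := by
  suffices h : ∀ k i, ρ (w i) ≤ k → ∃ j, i ≤ j ∧ j ≤ i + k ∧ w j ∈ S from
    fun i => h K i (hρ _)
  intro k
  induction k with
  | zero => exact fun i hi => ⟨i, le_rfl, by omega, by_contra fun hS => by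
      have := hdec i hS; omega⟩
  | succ k ih =>
    intro i hi
    by_cases hS : w i ∈ S
    · exact ⟨i, le_rfl, by omega, hS⟩
    · obtain ⟨j, hij, hjk, hj⟩ := ih (i + 1) (by have := hdec i hS; omega)
      exact ⟨j, by omega, by omega, hj⟩

lemma le_pow_mul_of_le_mul_add {L : ℕ → ℝ} {c : ℝ} (hc : 0 ≤ c) {K : ℕ}
    (h : ∀ i, L (i + K + 1) ≤ c * L i) (k : ℕ) : L (k * (K + 1)) ≤ c ^ k * L 0 := by
  induction k with
  | zero => simp
  | succ k ih =>
    calc L ((k + 1) * (K + 1)) = L (k * (K + 1) + K + 1) := by ring_nf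
      _ ≤ c * L (k * (K + 1)) := h _
      _ ≤ c * (c ^ k * L 0) := mul_le_mul_of_nonneg_left ih hc
      _ = c ^ (k + 1) * L 0 := by ring

lemma gWordList_append_singleton (M : MarkovMultiMap) (l : List M.A) (a : M.A) (x : ℝ) :
    gWordList M (l ++ [a]) x = gWordList M l (M.g a x) := by
  induction l with
  | nil => rfl
  | cons c l ih => exact congrArg (M.g c) ih

namespace MarkovMultiMap

instance (M : MarkovMultiMap) : Finite M.A := M.finA

variable (M : MarkovMultiMap)

def Transition (a b : M.A) : Prop := M.D0 b ⊆ M.R0 a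

/-- The set `D` of the statement. -/
def splitSymbols : Set M.A := {a | a ∈ M.A0 ∧ (M.R0 a ∩ (M.P : Set ℝ)).Nonempty}

/-- The contraction hypothesis of the theorem, with ratio `γ`. -/
def ContractsOnSplit (γ : ℝ) : Prop :=
  ∀ n : ℕ, ∀ u : Fin (n + 2) → M.A, u ∈ M.Lang (n + 2) →
    u (Fin.castSucc (Fin.last n)) ∈ M.A0 →
    (M.R0 (u (Fin.castSucc (Fin.last n))) ∩ (M.P : Set ℝ)).Nonempty →
    intervalLen (M.Iword (fun i : Fin (n + 1) => u i.castSucc)) ≠ 0 →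
    intervalLen (M.Iword u) ≤ γ * intervalLen (M.Iword (fun i : Fin (n + 1) => u i.castSucc))

variable {M}

lemma mem_A1_union_A2 {a : M.A} (ha : a ∉ M.A0) : a ∈ M.A1 ∪ M.A2 :=
  (M.A_cover a).resolve_left ha

lemma D_subset_Icc (a : M.A) : M.D a ⊆ Icc 0 1 :=
  M.cover ▸ subset_iUnion M.D a

lemma g_image_R_subset_D (a : M.A) : M.g a '' M.R a ⊆ M.D a := by
  rintro _ ⟨y, hy, rfl⟩
  by_cases ha : a ∈ M.A0
  · exact ((M.g_A0 a ha).2 y hy).1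
  · exact M.g_A12 a (mem_A1_union_A2 ha) y hy

lemma R0_subset_R (a : M.A) : M.R0 a ⊆ M.R a := by
  rcases M.A_cover a with h | h | h
  · rw [M.R0_A01 a (Or.inl h)]; exact interior_subset
  · rw [M.R0_A01 a (Or.inr h)]; exact interior_subset
  · rw [M.R0_A2 a h]

lemma isClosed_R (a : M.A) : IsClosed (M.R a) := by
  rcases M.A_cover a with h | h | h
  · obtain ⟨u, -, v, -, -, hR⟩ := M.R_A0 a h
    rw [hR]; exact isClosed_Icc
  · obtain ⟨u, -, v, -, -, hR, -⟩ := M.R_A1 a h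
    rw [hR]; exact isClosed_Icc
  · obtain ⟨u, -, hR⟩ := M.R_A2 a h
    rw [hR]; exact isClosed_singleton

lemma D_subset_R_of_transition {a b : M.A} (h : M.Transition a b) : M.D b ⊆ M.R a := by
  by_cases hb : b ∈ M.A0
  · obtain ⟨p, -, q, -, hpq, -, hD⟩ := M.D_A0 b hb
    have hD_closure : M.D b = closure (M.D0 b) := by
      rw [M.D0_A0 b hb, hD, interior_Icc, closure_Ioo hpq.ne]
    rw [hD_closure]
    exact closure_minimal (h.trans (M.R0_subset_R a)) (M.isClosed_R a)
  · rw [← M.D0_A12 b (mem_A1_union_A2 hb)]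
    exact h.trans (M.R0_subset_R a)

/-- Take the symbol whose domain contains a point `x' ∉ P` so close to `x` that no point of `P`
separates them: domains of `A₀`-symbols are gaps of `P`, so it contains `x` too. -/
lemma exists_mem_A0_mem_D_subset {u v x : ℝ} (hu : u ∈ M.P) (hv : v ∈ M.P) (huv : u < v)
    (hx : x ∈ Icc u v) : ∃ b ∈ M.A0, x ∈ M.D b ∧ M.D b ⊆ Icc u v := by
  obtain ⟨x', hx'uv, hx'P, hclose⟩ := exists_mem_Ioo_notMem_closer M.P.finite_toSet huv hx
  have hx'01 : x' ∈ Icc (0 : ℝ) 1 :=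
    ⟨(M.P_sub hu).1.trans hx'uv.1.le, hx'uv.2.le.trans (M.P_sub hv).2⟩
  rw [M.cover, mem_iUnion] at hx'01
  obtain ⟨b, hb⟩ := hx'01
  by_cases hbA0 : b ∈ M.A0
  swap
  · obtain ⟨p, hp, hD⟩ := M.D_A12 b (mem_A1_union_A2 hbA0)
    rw [hD, mem_singleton_iff] at hb
    exact absurd (hb ▸ hp) hx'P
  obtain ⟨p, hp, q, hq, hpq, hgap, hD⟩ := M.D_A0 b hbA0
  rw [hD] at hb
  refine ⟨b, hbA0, ?_⟩
  rw [hD]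
  have hpx' : p < x' := lt_of_le_of_ne hb.1 fun h => hx'P (h ▸ hp)
  have hx'q : x' < q := lt_of_le_of_ne hb.2 fun h => hx'P (h.symm ▸ hq)
  refine ⟨⟨?_, ?_⟩, Icc_subset_Icc ?_ ?_⟩
  · by_contra! h
    have := hclose p hp h.ne'
    rw [abs_of_pos (sub_pos.2 h)] at this
    linarith [le_abs_self (x' - x)]
  · by_contra! h
    have := hclose q hq h.ne
    rw [abs_of_neg (sub_neg.2 h)] at this
    linarith [neg_abs_le (x' - x)]
  · by_contra! h
    exact hgap u hu ⟨h, hx'uv.1.trans hx'q⟩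
  · by_contra! h
    exact hgap v hv ⟨hpx'.trans hx'uv.2, h⟩

lemma exists_transition_of_mem_R {a : M.A} {y : ℝ} (ha : a ∈ M.A0) (hy : y ∈ M.R a) :
    ∃ b ∈ M.A0, y ∈ M.D b ∧ M.Transition a b := by
  obtain ⟨u, hu, v, hv, huv, hR⟩ := M.R_A0 a ha
  obtain ⟨b, hb, hyb, hDb⟩ := M.exists_mem_A0_mem_D_subset hu hv huv (hR ▸ hy)
  refine ⟨b, hb, hyb, ?_⟩
  rw [Transition, M.D0_A0 b hb, M.R0_A01 a (Or.inl ha), hR]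
  exact interior_mono hDb

lemma mem_A0_and_D_eq_R_of_transition {a b : M.A} (ha : a ∈ M.A0) (hs : a ∉ M.splitSymbols)
    (hab : M.Transition a b) : b ∈ M.A0 ∧ M.D b = M.R a := by
  obtain ⟨u, -, v, -, -, hR⟩ := M.R_A0 a ha
  have hR0 : M.R0 a = Ioo u v := by rw [M.R0_A01 a (Or.inl ha), hR, interior_Icc]
  have hP : ∀ r ∈ M.P, r ∉ Ioo u v := fun r hr hmem => hs ⟨ha, r, hR0 ▸ hmem, hr⟩
  by_cases hb : b ∈ M.A0
  · obtain ⟨p, hp, q, hq, hpq, -, hD⟩ := M.D_A0 b hb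
    have hsub : Ioo p q ⊆ Ioo u v := by
      rw [← hR0, ← interior_Icc, ← hD, ← M.D0_A0 b hb]; exact hab
    obtain ⟨hup, hqv⟩ := (Ioo_subset_Ioo_iff hpq).1 hsub
    have hpu : p = u := by_contra fun h => hP p hp ⟨lt_of_le_of_ne hup (Ne.symm h), hpq.trans_le hqv⟩
    have hqv' : q = v := by_contra fun h => hP q hq ⟨hup.trans_lt hpq, lt_of_le_of_ne hqv h⟩
    exact ⟨hb, by rw [hD, hR, hpu, hqv']⟩
  · obtain ⟨p, hp, hD⟩ := M.D_A12 b (mem_A1_union_A2 hb)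
    refine absurd (hR0 ▸ hab ?_) (hP p hp)
    rw [M.D0_A12 b (mem_A1_union_A2 hb), hD]
    rfl

lemma WordFromTo.exists_chain {C : Set M.A} {a b : M.A} {n : ℕ} (h : M.WordFromTo C a b n) :
    ∃ w : ℕ → M.A, w 0 = a ∧ w n = b ∧ ChainUpTo M.Transition w n ∧ ∀ i ≤ n, w i ∈ C := by
  obtain ⟨u, ⟨⟨z, hz, m, hzm⟩, huC⟩, hu0, hun⟩ := h
  refine ⟨fun i => z (m + i), hu0 ▸ (hzm 0).symm, hun ▸ (hzm (Fin.last n)).symm,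
    fun i _ => hz (m + i), fun i hi => ?_⟩
  simpa [← hzm ⟨i, by omega⟩] using huC ⟨i, by omega⟩

lemma IrreducibleSet.exists_wordFromTo_le {C : Set M.A} (hC : M.IrreducibleSet C) :
    ∃ L, ∀ a ∈ C, ∀ b ∈ C, ∃ n ≤ L, M.WordFromTo C a b n := by
  choose! n hn using hC
  obtain ⟨L, hL⟩ := Finite.exists_le fun p : M.A × M.A => n p.1 p.2
  exact ⟨L, fun a ha b hb => ⟨n a b, hL (a, b), hn a ha b hb⟩⟩

/-! ### Distance to `D` and coding orbits -/

variable (M) in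
def splitPathLengths (a : M.A) : Set ℕ :=
  {n | ∃ w : ℕ → M.A, w 0 = a ∧ ChainUpTo M.Transition w n ∧ w n ∈ M.splitSymbols}

variable (M) in
noncomputable def distToSplit (a : M.A) : ℕ := sInf (M.splitPathLengths a)

lemma splitPathLengths_nonempty {C : Set M.A} (hC : M.IrreducibleSet C) (hA0C : M.A0 ⊆ C)
    {d : M.A} (hd : d ∈ M.splitSymbols) {a : M.A} (ha : a ∈ M.A0) :
    (M.splitPathLengths a).Nonempty := by
  obtain ⟨n, hn⟩ := hC a (hA0C ha) d (hA0C hd.1)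
  obtain ⟨w, hw0, hwn, hw, -⟩ := hn.exists_chain
  exact ⟨n, w, hw0, hw, hwn ▸ hd⟩

lemma exists_transition_distToSplit_lt {a : M.A} (h : (M.splitPathLengths a).Nonempty)
    (ha : a ∉ M.splitSymbols) : ∃ b, M.Transition a b ∧ M.distToSplit b < M.distToSplit a := by
  set n := M.distToSplit a
  obtain ⟨w, hw0, hw, hwn⟩ : n ∈ M.splitPathLengths a := Nat.sInf_mem h
  have hn : n ≠ 0 := fun h0 => ha (hw0 ▸ h0 ▸ hwn)
  refine ⟨w 1, hw0 ▸ hw 0 (by omega), lt_of_le_of_lt (Nat.sInf_le ?_) (by omega : n - 1 < n)⟩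
  exact ⟨fun i => w (i + 1), rfl, fun i hi => hw (i + 1) (by omega),
    show w (n - 1 + 1) ∈ _ by rwa [show n - 1 + 1 = n by omega]⟩

lemma exists_next_symbol (hreach : ∀ a ∈ M.A0, (M.splitPathLengths a).Nonempty) {a : M.A}
    {x : ℝ} (ha : a ∈ M.A0) (hx : x ∈ M.D a) :
    ∃ b ∈ M.A0, M.Transition a b ∧ M.f a x ∈ M.D b ∧
      (a ∉ M.splitSymbols → M.distToSplit b < M.distToSplit a) := by
  have hfx : M.f a x ∈ M.R a := (M.f_homeo a ha).2.mapsTo hx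
  by_cases hs : a ∈ M.splitSymbols
  · obtain ⟨b, hb, hxb, hab⟩ := M.exists_transition_of_mem_R ha hfx
    exact ⟨b, hb, hab, hxb, absurd hs⟩
  · obtain ⟨b, hab, hlt⟩ := M.exists_transition_distToSplit_lt (hreach a ha) hs
    obtain ⟨hb, hDb⟩ := M.mem_A0_and_D_eq_R_of_transition ha hs hab
    exact ⟨b, hb, hab, hDb ▸ hfx, fun _ => hlt⟩

variable (M) in
def IsA0Trajectory (w : ℕ → M.A) (y : ℕ → ℝ) : Prop :=
  ∀ i, w i ∈ M.A0 ∧ y i ∈ M.D (w i) ∧ y (i + 1) = M.f (w i) (y i) ∧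
    M.Transition (w i) (w (i + 1))

lemma IsA0Trajectory.mem_Gr {w : ℕ → M.A} {y : ℕ → ℝ} (h : M.IsA0Trajectory w y) (i : ℕ) :
    (y i, y (i + 1)) ∈ M.Gr (w i) := by
  rw [M.Gr_A0 _ (h i).1]
  exact ⟨(h i).2.1, (h i).2.2.1⟩

variable (M) in
def HasCodingOrbits (K : ℕ) : Prop :=
  ∀ a ∈ M.A0, ∀ x ∈ M.D a, ∃ (w : ℕ → M.A) (y : ℕ → ℝ), w 0 = a ∧ y 0 = x ∧
    M.IsA0Trajectory w y ∧ VisitsWithin K M.splitSymbols w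

lemma exists_hasCodingOrbits (hreach : ∀ a ∈ M.A0, (M.splitPathLengths a).Nonempty) :
    ∃ K, M.HasCodingOrbits K := by
  obtain ⟨K, hK⟩ := Finite.exists_le M.distToSplit
  refine ⟨K, fun a ha x hx => ?_⟩
  have hnext : ∀ s : ℝ × M.A, ∃ b, s.2 ∈ M.A0 → s.1 ∈ M.D s.2 →
      b ∈ M.A0 ∧ M.Transition s.2 b ∧ M.f s.2 s.1 ∈ M.D b ∧
        (s.2 ∉ M.splitSymbols → M.distToSplit b < M.distToSplit s.2) := fun s => by
    by_cases hs : s.2 ∈ M.A0 ∧ s.1 ∈ M.D s.2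
    · obtain ⟨b, hb⟩ := M.exists_next_symbol hreach hs.1 hs.2
      exact ⟨b, fun _ _ => hb⟩
    · exact ⟨s.2, fun h1 h2 => absurd ⟨h1, h2⟩ hs⟩
  choose next hnext using hnext
  let T : ℝ × M.A → ℝ × M.A := fun s => (M.f s.2 s.1, next s)
  let s : ℕ → ℝ × M.A := fun k => T^[k] (x, a)
  have hs : ∀ k, s (k + 1) = T (s k) := fun k => Function.iterate_succ_apply' T k (x, a)
  have hinv : ∀ k, (s k).2 ∈ M.A0 ∧ (s k).1 ∈ M.D (s k).2 := by
    intro k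
    induction k with
    | zero => exact ⟨ha, hx⟩
    | succ k ih =>
      obtain ⟨hb, -, hfb, -⟩ := hnext _ ih.1 ih.2
      rw [hs]
      exact ⟨hb, hfb⟩
  refine ⟨fun k => (s k).2, fun k => (s k).1, rfl, rfl, fun k => ?_, ?_⟩
  · obtain ⟨-, hab, -, -⟩ := hnext _ (hinv k).1 (hinv k).2
    exact ⟨(hinv k).1, (hinv k).2, by simp only [hs]; rfl, by simp only [hs]; exact hab⟩
  · refine visitsWithin_of_lt M.distToSplit hK fun k hk => ?_
    simp only [hs]
    exact (hnext _ (hinv k).1 (hinv k).2).2.2.2 hk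

/-! ### The coding subshift -/

variable (M) in
def codingShift (C : Set M.A) (K : ℕ) : Set (ℕ → M.A) :=
  {z | z ∈ M.SFT ∧ (∀ i, z i ∈ C) ∧ VisitsWithin K (M.A0ᶜ ∪ M.splitSymbols) z}

variable {C : Set M.A} {K : ℕ}

lemma shift_mem_codingShift {z : ℕ → M.A} (hz : z ∈ M.codingShift C K) (m : ℕ) :
    (fun i => z (i + m)) ∈ M.codingShift C K := by
  refine ⟨fun i => ?_, fun i => hz.2.1 _, fun i => ?_⟩
  · show M.Transition (z (i + m)) (z (i + 1 + m))
    rw [show i + 1 + m = i + m + 1 by omega]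
    exact hz.1 _
  · obtain ⟨j, hij, hjK, hj⟩ := hz.2.2 (i + m)
    exact ⟨j - m, by omega, by omega, show z (j - m + m) ∈ _ by rwa [Nat.sub_add_cancel (by omega)]⟩

lemma isSubshift_codingShift : M.IsSubshift (M.codingShift C K) := by
  refine ⟨fun z hz => hz.1, fun z hz => M.shift_mem_codingShift hz 1, fun x hx => ?_⟩
  refine ⟨fun i => ?_, fun i => ?_, fun i => ?_⟩
  · obtain ⟨z, hz, hzx⟩ := hx (i + 2)
    rw [← hzx i (by omega), ← hzx (i + 1) (by omega)]
    exact hz.1 i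
  · obtain ⟨z, hz, hzx⟩ := hx (i + 1)
    rw [← hzx i (by omega)]
    exact hz.2.1 i
  · obtain ⟨z, hz, hzx⟩ := hx (i + K + 1)
    obtain ⟨j, hij, hjK, hj⟩ := hz.2.2 i
    exact ⟨j, hij, hjK, hzx j (by omega) ▸ hj⟩

lemma IsA0Trajectory.mem_codingShift {w : ℕ → M.A} {y : ℕ → ℝ} (h : M.IsA0Trajectory w y)
    {Kc : ℕ} (hgap : VisitsWithin Kc M.splitSymbols w) (hA0C : M.A0 ⊆ C) (hK : Kc ≤ K) :
    w ∈ M.codingShift C K := by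
  refine ⟨fun i => (h i).2.2.2, fun i => hA0C (h i).1, fun i => ?_⟩
  obtain ⟨j, hij, hjK, hj⟩ := hgap i
  exact ⟨j, hij, by omega, Or.inr hj⟩

lemma splice_mem_codingShift {w t : ℕ → M.A} {n K' : ℕ} (hw : ChainUpTo M.Transition w n)
    (hwC : ∀ i ≤ n, w i ∈ C) (hwt : w n = t 0) (ht : t ∈ M.codingShift C K')
    (hK : n + K' ≤ K) : splice w n t ∈ M.codingShift C K := by
  refine ⟨splice_chain hw hwt ht.1, fun i => ?_, fun i => ?_⟩
  · rcases le_total i n with hi | hi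
    · rw [splice_of_le_left hi hwt]; exact hwC i hi
    · rw [splice_of_le_right hi]; exact ht.2.1 _
  · obtain ⟨j, hij, hjK, hj⟩ := ht.2.2.splice (w := w) i
    exact ⟨j, hij, by omega, hj⟩

/-- Connect `a` to `b` and then `b` to the symbol `d` inside `C`, and continue by a coding orbit
from `d`. -/
lemma transitiveOnSymbols_codingShift {L Kc : ℕ}
    (hL : ∀ a ∈ C, ∀ b ∈ C, ∃ n ≤ L, M.WordFromTo C a b n) (hA0C : M.A0 ⊆ C)
    (horb : M.HasCodingOrbits Kc) {d : M.A} (hd : d ∈ M.A0) (hK : 2 * L + Kc ≤ K) :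
    M.TransitiveOnSymbols (M.codingShift C K) := by
  rintro a b ⟨za, hza, ka, rfl⟩ ⟨zb, hzb, kb, rfl⟩
  obtain ⟨n₁, hn₁, hw₁⟩ := hL _ (hza.2.1 ka) _ (hzb.2.1 kb)
  obtain ⟨n₂, hn₂, hw₂⟩ := hL _ (hzb.2.1 kb) d (hA0C hd)
  obtain ⟨w₁, hw₁0, hw₁n, hw₁, hw₁C⟩ := hw₁.exists_chain
  obtain ⟨w₂, hw₂0, hw₂n, hw₂, hw₂C⟩ := hw₂.exists_chain
  obtain ⟨p, -, q, -, hpq, -, hD⟩ := M.D_A0 d hd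
  obtain ⟨t, y, ht0, -, ht, hgap⟩ := horb d hd p (hD ▸ ⟨le_rfl, hpq.le⟩)
  have hwt₂ : w₂ n₂ = t 0 := hw₂n.trans ht0.symm
  have hwt₁ : w₁ n₁ = splice w₂ n₂ t 0 := by
    rw [splice_of_le_left (Nat.zero_le _) hwt₂, hw₁n, hw₂0]
  refine ⟨splice w₁ n₁ (splice w₂ n₂ t), ?_, 0, n₁, ?_, ?_⟩
  · exact splice_mem_codingShift hw₁ hw₁C hwt₁
      (splice_mem_codingShift hw₂ hw₂C hwt₂ (ht.mem_codingShift hgap hA0C le_rfl) le_rfl)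
      (by omega)
  · rw [splice_of_le_left (Nat.zero_le _) hwt₁, hw₁0]
  · rw [zero_add, splice_of_le_left le_rfl hwt₁, hw₁n]

lemma exists_codingShift_label {Kc : ℕ} (horb : M.HasCodingOrbits Kc) (hA0C : M.A0 ⊆ C)
    (hK : Kc ≤ K) {y : ℝ} (hy : y ∈ Icc (0 : ℝ) 1) :
    ∃ a ∈ M.codingShift C K, ∃ x ∈ M.X, x 0 = y ∧ ∀ i, (x i, x (i + 1)) ∈ M.Gr (a i) := by
  obtain ⟨b, hb, hyb, -⟩ := M.exists_mem_A0_mem_D_subset M.P_zero M.P_one one_pos hy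
  obtain ⟨w, x, -, hx0, hwx, hgap⟩ := horb b hb y hyb
  exact ⟨w, hwx.mem_codingShift hgap hA0C hK, x,
    ⟨fun k => M.D_subset_Icc _ (hwx k).2.1, fun k => mem_iUnion.2 ⟨_, hwx.mem_Gr k⟩⟩,
    hx0, hwx.mem_Gr⟩

/-! ### Shrinking of the intervals `I_u` -/

lemma gWordList_ofFn_succ (z : ℕ → M.A) (n : ℕ) :
    gWordList M (List.ofFn fun i : Fin (n + 1) => z i) =
      gWordList M (List.ofFn fun i : Fin n => z i) ∘ M.g (z n) := by
  funext x
  rw [List.ofFn_succ', List.concat_eq_append, Function.comp_apply,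
    gWordList_append_singleton]
  rfl

lemma Iword_prefix_eq (z : ℕ → M.A) (n : ℕ) :
    M.Iword (fun i : Fin (n + 1) => z i) =
      gWordList M (List.ofFn fun i : Fin n => z i) '' (M.g (z n) '' M.R (z n)) := by
  rw [Iword, gWord, gWordList_ofFn_succ, Set.image_comp]
  rfl

lemma Iword_prefix_succ_subset {z : ℕ → M.A} {n : ℕ} (h : M.Transition (z n) (z (n + 1))) :
    M.Iword (fun i : Fin (n + 2) => z i) ⊆ M.Iword (fun i : Fin (n + 1) => z i) := by
  rw [Iword_prefix_eq z (n + 1)]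
  exact image_mono ((M.g_image_R_subset_D _).trans (M.D_subset_R_of_transition h))

lemma Iword_prefix_subset_Icc {z : ℕ → M.A} (hz : z ∈ M.SFT) (n : ℕ) :
    M.Iword (fun i : Fin (n + 1) => z i) ⊆ Icc 0 1 := by
  induction n with
  | zero =>
    rw [Iword_prefix_eq, List.ofFn_zero]
    exact (image_id' _).subset.trans ((M.g_image_R_subset_D _).trans (M.D_subset_Icc _))
  | succ n ih => exact (Iword_prefix_succ_subset (hz n)).trans ih

variable (M) in
noncomputable def prefixLen (z : ℕ → M.A) (n : ℕ) : ℝ :=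
  intervalLen (M.Iword fun i : Fin (n + 1) => z i)

lemma prefixLen_eq_diam {z : ℕ → M.A} (hz : z ∈ M.SFT) (n : ℕ) :
    M.prefixLen z n = Metric.diam (M.Iword fun i : Fin (n + 1) => z i) :=
  intervalLen_eq_diam ((Metric.isBounded_Icc 0 1).subset (Iword_prefix_subset_Icc hz n))

lemma prefixLen_nonneg {z : ℕ → M.A} (hz : z ∈ M.SFT) (n : ℕ) : 0 ≤ M.prefixLen z n :=
  (prefixLen_eq_diam hz n).symm ▸ Metric.diam_nonneg

lemma prefixLen_zero_le_one {z : ℕ → M.A} (hz : z ∈ M.SFT) : M.prefixLen z 0 ≤ 1 := by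
  calc M.prefixLen z 0 ≤ Metric.diam (Icc (0 : ℝ) 1) := by
        rw [prefixLen_eq_diam hz]
        exact Metric.diam_mono (Iword_prefix_subset_Icc hz 0) (Metric.isBounded_Icc 0 1)
    _ = 1 := by rw [Real.diam_Icc zero_le_one, sub_zero]

lemma prefixLen_antitone {z : ℕ → M.A} (hz : z ∈ M.SFT) : Antitone (M.prefixLen z) := by
  refine antitone_nat_of_succ_le fun n => ?_
  rw [prefixLen_eq_diam hz, prefixLen_eq_diam hz]
  exact Metric.diam_mono (Iword_prefix_succ_subset (hz n))
    ((Metric.isBounded_Icc 0 1).subset (Iword_prefix_subset_Icc hz n))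

lemma prefixLen_eq_zero_of_notMem_A0 {z : ℕ → M.A} {n : ℕ} (hn : z n ∉ M.A0) :
    M.prefixLen z n = 0 := by
  obtain ⟨p, -, hD⟩ := M.D_A12 _ (mem_A1_union_A2 hn)
  refine intervalLen_eq_zero_of_subsingleton ?_
  rw [Iword_prefix_eq]
  exact ((subsingleton_singleton (a := p)).anti (hD ▸ M.g_image_R_subset_D _)).image _

lemma prefixLen_succ_le_of_mem_splitSymbols {γ : ℝ} (hγ : M.ContractsOnSplit γ)
    {z : ℕ → M.A} (hz : z ∈ M.SFT) {n : ℕ} (hn : z n ∈ M.splitSymbols) :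
    M.prefixLen z (n + 1) ≤ max γ 0 * M.prefixLen z n := by
  by_cases h0 : M.prefixLen z n = 0
  · rw [h0, mul_zero, ← h0]
    exact prefixLen_antitone hz n.le_succ
  · calc M.prefixLen z (n + 1) ≤ γ * M.prefixLen z n :=
          hγ n (fun i => z i) ⟨z, hz, 0, fun i => by simp⟩ hn.1 hn.2 h0
      _ ≤ max γ 0 * M.prefixLen z n :=
          mul_le_mul_of_nonneg_right (le_max_left _ _) (prefixLen_nonneg hz n)

lemma prefixLen_add_le {γ : ℝ} (hγ : M.ContractsOnSplit γ) {z : ℕ → M.A}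
    (hz : z ∈ M.codingShift C K) (i : ℕ) :
    M.prefixLen z (i + K + 1) ≤ max γ 0 * M.prefixLen z i := by
  obtain ⟨j, hij, hjK, hj⟩ := hz.2.2 i
  have hanti := prefixLen_antitone hz.1
  have hc : 0 ≤ max γ 0 := le_max_right _ _
  calc M.prefixLen z (i + K + 1) ≤ M.prefixLen z (j + 1) := hanti (by omega)
    _ ≤ max γ 0 * M.prefixLen z j := by
        rcases hj with hj | hj
        · rw [prefixLen_eq_zero_of_notMem_A0 hj, mul_zero,
            ← prefixLen_eq_zero_of_notMem_A0 hj]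
          exact hanti j.le_succ
        · exact prefixLen_succ_le_of_mem_splitSymbols hγ hz.1 hj
    _ ≤ max γ 0 * M.prefixLen z i := mul_le_mul_of_nonneg_left (hanti hij) hc

lemma intervalLen_Iword_lt {γ : ℝ} (hγ1 : γ < 1) (hγ : M.ContractsOnSplit γ) {ε : ℝ}
    (hε : 0 < ε) : ∃ N : ℕ, ∀ n : ℕ, N ≤ n → ∀ u : Fin (n + 1) → M.A,
      M.WordIn u (M.codingShift C K) → intervalLen (M.Iword u) < ε := by
  have hc : 0 ≤ max γ 0 := le_max_right _ _
  obtain ⟨k, hk⟩ := exists_pow_lt_of_lt_one hε (max_lt hγ1 one_pos)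
  refine ⟨k * (K + 1), fun n hn u ⟨z, hz, m, hzm⟩ => ?_⟩
  have hz' := M.shift_mem_codingShift hz m
  have hu : u = fun i : Fin (n + 1) => z (i + m) := funext fun i => (hzm i).trans (by rw [add_comm])
  calc intervalLen (M.Iword u) = M.prefixLen (fun i => z (i + m)) n := by rw [hu]; rfl
    _ ≤ M.prefixLen (fun i => z (i + m)) (k * (K + 1)) := prefixLen_antitone hz'.1 hn
    _ ≤ max γ 0 ^ k * M.prefixLen (fun i => z (i + m)) 0 :=
        le_pow_mul_of_le_mul_add hc (prefixLen_add_le hγ hz') k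
    _ ≤ max γ 0 ^ k := mul_le_of_le_one_right (pow_nonneg hc k) (prefixLen_zero_le_one hz'.1)
    _ < ε := hk

end MarkovMultiMap

/-- Sufficient condition for the Coding Condition: if `D = {a ∈ A₀ : R₀(a) ∩ P ≠ ∅}`
is nonempty, the contraction ratios along `D` are uniformly bounded below `1`, and some
irreducible component contains `A₀`, then `Σ_M` satisfies (CC). -/
theorem stmt16 (M : MarkovMultiMap)
    (hDne : ∃ a ∈ M.A0, (M.R0 a ∩ (M.P : Set ℝ)).Nonempty)
    (hcontract : ∃ γ : ℝ, γ < 1 ∧ ∀ n : ℕ, ∀ u : Fin (n + 2) → M.A, u ∈ M.Lang (n + 2) →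
      u ⟨n, by omega⟩ ∈ M.A0 → (M.R0 (u ⟨n, by omega⟩) ∩ (M.P : Set ℝ)).Nonempty →
      intervalLen (M.Iword (fun i : Fin (n + 1) => u i.castSucc)) ≠ 0 →
      intervalLen (M.Iword u) ≤
        γ * intervalLen (M.Iword (fun i : Fin (n + 1) => u i.castSucc)))
    (hirr : ∃ C0 : Set M.A, M.IrreducibleComponent C0 ∧ M.A0 ⊆ C0) :
    M.CC := by
  obtain ⟨γ, hγ1, hγ⟩ := hcontract
  obtain ⟨C, ⟨hC, -⟩, hA0C⟩ := hirr
  obtain ⟨d, hd⟩ := hDne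
  obtain ⟨Kc, horb⟩ := M.exists_hasCodingOrbits fun a ha =>
    M.splitPathLengths_nonempty hC hA0C hd ha
  obtain ⟨L, hL⟩ := hC.exists_wordFromTo_le
  exact ⟨M.codingShift C (2 * L + Kc), M.isSubshift_codingShift,
    M.transitiveOnSymbols_codingShift hL hA0C horb hd.1 le_rfl,
    fun y hy => M.exists_codingShift_label horb hA0C (by omega) hy,
    fun ε hε => M.intervalLen_Iword_lt hγ1 hγ hε⟩
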